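/- Harmonicity of the coordinate-plus-corrector function in terms of the divergence operator: for any x in the infinite cluster and b ∈ B, L^ω φ(ω,x)·b = (1/2)∇^{(ω)*}b̂(x.ω) + (1/2)∇^{(ω)*}G_b(x.ω), where φ(x) = x + χ(ω,x); in particular, since b̂ + G_b ∈ L^2_sol, this expression vanishes. -/

import Mathlib

open MeasureTheory Filter Topology
open scoped ENNReal NNReal Classical

namespace PercWalk

/-- The lattice `ℤ^d`. -/
abbrev Zd (d : ℕ) := Fin d → ℤ

/-- A percolation configuration: `ω (x, i)` is the state of the bond from `x` to `x + eᵢ`. -/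
abbrev Config (d : ℕ) := (Zd d × Fin d) → Bool

noncomputable section

variable {d : ℕ}

/-- The `i`-th unit vector of `ℤ^d`. -/
def unitV (d : ℕ) (i : Fin d) : Zd d := fun j => if j = i then 1 else 0

/-- The (unordered) nearest-neighbour edge `{x,y}` is open in the configuration `ω`. -/
def edgeOpen (ω : Config d) (x y : Zd d) : Prop :=
  (∃ i, y = x + unitV d i ∧ ω (x, i) = true) ∨ (∃ i, x = y + unitV d i ∧ ω (y, i) = true)

/-- Translation (shift) of a configuration by `x`: this is `x.ω`. -/
def shift (x : Zd d) (ω : Config d) : Config d := fun p => ω (x + p.1, p.2)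

/-- The open cluster of the point `x` in the configuration `ω`. -/
def cluster (ω : Config d) (x : Zd d) : Set (Zd d) :=
  {y | Relation.ReflTransGen (fun a b => edgeOpen ω a b) x y}

/-- The set of points lying in an infinite open cluster (a.s. the unique infinite cluster `C(ω)`). -/
def infCluster (ω : Config d) : Set (Zd d) := {x | (cluster ω x).Infinite}

/-- The event `#C₀(ω) = ∞`. -/
def InfiniteCluster0 (d : ℕ) : Set (Config d) := {ω | (cluster ω 0).Infinite}

/-- The set `B` of lattice neighbours of the origin, as a finset. -/
def nbrs (d : ℕ) : Finset (Zd d) :=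
  (Finset.univ : Finset (Fin d × Bool)).image
    (fun p => if p.2 then unitV d p.1 else -unitV d p.1)

/-- `n^ω(x)`: the number of neighbours of `x` in its cluster. -/
def deg (ω : Config d) (x : Zd d) : ℕ :=
  ((nbrs d).filter (fun e => edgeOpen ω x (x + e))).card

/-- `Q` is Bernoulli(`p`) bond percolation: the bonds are i.i.d. Bernoulli(`p`). -/
def IsBernoulli (Q : Measure (Config d)) (p : ℝ) : Prop :=
  IsProbabilityMeasure Q ∧
    ∀ s : Finset (Zd d × Fin d), ∀ f : (Zd d × Fin d) → Bool,
      Q {ω | ∀ a ∈ s, ω a = f a} =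
        ∏ a ∈ s, ENNReal.ofReal (if f a then p else 1 - p)

/-- The critical probability associated with a family `Qf p` of Bernoulli(`p`)
percolation measures. -/
def pcOf (Qf : ℝ → Measure (Config d)) : ℝ :=
  sSup {p : ℝ | p ∈ Set.Icc (0 : ℝ) 1 ∧ Qf p (InfiniteCluster0 d) = 0}

/-- The conditional measure `Q₀ = Q( · | #C₀(ω) = ∞)`. -/
def Q0 (Q : Measure (Config d)) : Measure (Config d) :=
  ProbabilityTheory.cond Q (InfiniteCluster0 d)

/-- The measure `M` on `Ω × B`, `∫ u dM = Q[∑_{b∈B} ω(b) u(ω,b) 1_{#C₀(ω)=∞}]`. -/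
def Mm (Q : Measure (Config d)) : Measure (Config d × Zd d) :=
  ∑ e ∈ nbrs d, Measure.map (fun ω => (ω, e))
    (Q.restrict {ω | edgeOpen ω 0 e ∧ ω ∈ InfiniteCluster0 d})

/-- A local function: it depends on finitely many bonds only. -/
def IsLocal (u : Config d → ℝ) : Prop :=
  ∃ s : Finset (Zd d × Fin d), ∀ ω ω' : Config d, (∀ a ∈ s, ω a = ω' a) → u ω = u ω'

/-- The gradient `∇^{(ω)} u (ω,b) = u(b.ω) - u(ω)` of a function on configurations. -/
def gradF (u : Config d → ℝ) : Config d × Zd d → ℝ := fun p => u (shift p.2 p.1) - u p.1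

/-- `L²_pot`: the closure in `L²(Ω × B, M)` of the set of gradients of local functions. -/
def L2pot (Q : Measure (Config d)) : Set (Lp ℝ 2 (Mm Q)) :=
  closure {v : Lp ℝ 2 (Mm Q) |
    ∃ u : Config d → ℝ, IsLocal u ∧ (v : Config d × Zd d → ℝ) =ᵐ[Mm Q] gradF u}

/-- `L²_sol`: the orthogonal complement of `L²_pot` in `L²(Ω × B, M)`. -/
def L2sol (Q : Measure (Config d)) : Set (Lp ℝ 2 (Mm Q)) :=
  {w : Lp ℝ 2 (Mm Q) | ∀ v ∈ L2pot Q, inner (𝕜 := ℝ) w v = 0}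

/-- The divergence `∇^{(ω)*} v (ω) = (1/n^ω(0)) ∑_{b∈B} ω(b) (v(ω,b) - v(b.ω,-b))`. -/
def divStarF (ω : Config d) (v : Config d → Zd d → ℝ) : ℝ :=
  (deg ω 0 : ℝ)⁻¹ * ∑ e ∈ nbrs d,
    if edgeOpen ω 0 e then v ω e - v (shift e ω) (-e) else 0

/-- The field `b̂(ω,e) = 1_{e=b} - 1_{e=-b}`. -/
def bhat (b : Zd d) : Config d × Zd d → ℝ :=
  fun p => (if p.2 = b then (1 : ℝ) else 0) - (if p.2 = -b then (1 : ℝ) else 0)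

/-- Scalar product of an integer vector with an integer vector, as a real number. -/
def dotZ (x y : Zd d) : ℝ := ∑ i, (x i : ℝ) * (y i : ℝ)

/-- Scalar product of a real vector with an integer vector. -/
def dotR (v : Fin d → ℝ) (y : Zd d) : ℝ := ∑ i, v i * (y i : ℝ)

/-- The generator `L^ω f(x) = (1/n^ω(x)) ∑_{y∼x} ω(x,y) (f(y) - f(x))`. -/
def Lgen (ω : Config d) (f : Zd d → ℝ) (x : Zd d) : ℝ :=
  (deg ω x : ℝ)⁻¹ * ∑ e ∈ nbrs d,
    if edgeOpen ω x (x + e) then f (x + e) - f x else 0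

/-- `G` is a family `(G_b)_{b ∈ B}` with `G_b ∈ L²_pot` and `b̂ + G_b ∈ L²_sol`
(`G_b` is the projection of `-b̂` on `L²_pot`), given by an everywhere-defined
representative. -/
def IsGradField (Q : Measure (Config d)) (G : Zd d → Config d → Zd d → ℝ) : Prop :=
  ∀ b ∈ nbrs d,
    (∃ g : Lp ℝ 2 (Mm Q), g ∈ L2pot Q ∧
      (g : Config d × Zd d → ℝ) =ᵐ[Mm Q] fun p => G b p.1 p.2) ∧
    (∀ v ∈ L2pot Q, ∫ p, (bhat b p + G b p.1 p.2) * (v : Config d × Zd d → ℝ) p ∂(Mm Q) = 0)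

/-- `χ(ω,·)` is a corrector associated with the family `G`: for `x` in the cluster of the
origin and an open bond `(x, x+e)`, `χ(ω,x+e)·b − χ(ω,x)·b = G_b(x.ω, e)`. -/
def IsCorrector (G : Zd d → Config d → Zd d → ℝ) (χ : Zd d → Fin d → ℝ) (ω : Config d) : Prop :=
  ∀ x ∈ cluster ω 0, ∀ e ∈ nbrs d, edgeOpen ω x (x + e) → ∀ b ∈ nbrs d,
    dotR (χ (x + e)) b - dotR (χ x) b = G b (shift x ω) e

/-- The Palm-type measure `P̄(A) = Q[1_A n^ω(0) 1_{0 ∈ C(ω)}]`. -/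
def Pbar (Q : Measure (Config d)) : Measure (Config d) :=
  Q.withDensity (fun ω => if (0 : Zd d) ∈ infCluster ω then (deg ω 0 : ℝ≥0∞) else 0)

/-- The open unit box `G = ]-1,1[^d`. -/
def boxG (d : ℕ) : Set (Fin d → ℝ) := {v | ∀ i, |v i| < 1}

/-- The point `ε x ∈ ℝ^d` for `x ∈ ℤ^d`. -/
def scl (ε : ℝ) (x : Zd d) : Fin d → ℝ := fun i => ε * (x i : ℝ)

end

end PercWalk

namespace PercWalk
noncomputable section
namespace PW
open PercWalk
variable {d : ℕ}

lemma shift_shift (x e : Zd d) (ω : Config d) : shift e (shift x ω) = shift (x + e) ω := by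
  funext p; simp [shift, add_assoc]

lemma shift_zero (ω : Config d) : shift (0 : Zd d) ω = ω := by
  funext p; simp [shift]

lemma shift_neg_shift (e : Zd d) (ω : Config d) : shift (-e) (shift e ω) = ω := by
  rw [shift_shift, add_neg_cancel, shift_zero]

lemma shift_shift_neg (e : Zd d) (ω : Config d) : shift e (shift (-e) ω) = ω := by
  rw [shift_shift, neg_add_cancel, shift_zero]

lemma edgeOpen_shift (x a c : Zd d) (ω : Config d) :
    edgeOpen (shift x ω) a c ↔ edgeOpen ω (x + a) (x + c) := by
  unfold edgeOpen shift
  constructor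
  · rintro (⟨i, h1, h2⟩ | ⟨i, h1, h2⟩)
    · exact Or.inl ⟨i, by rw [h1]; abel, h2⟩
    · exact Or.inr ⟨i, by rw [h1]; abel, h2⟩
  · rintro (⟨i, h1, h2⟩ | ⟨i, h1, h2⟩)
    · exact Or.inl ⟨i, by apply add_left_cancel (a := x); rw [h1]; abel, h2⟩
    · exact Or.inr ⟨i, by apply add_left_cancel (a := x); rw [h1]; abel, h2⟩

lemma edgeOpen_symm {ω : Config d} {a c : Zd d} (h : edgeOpen ω a c) : edgeOpen ω c a :=
  h.symm

lemma unitV_injective : Function.Injective (unitV d) := by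
  intro i j h
  by_contra hij
  have := congrFun h i
  simp [unitV, hij] at this

lemma unitV_ne_neg (i j : Fin d) : unitV d i ≠ -unitV d j := by
  intro h
  have := congrFun h i
  simp only [unitV, Pi.neg_apply, if_pos rfl] at this
  by_cases hij : i = j <;> simp [hij] at this

lemma mem_nbrs_iff {e : Zd d} : e ∈ nbrs d ↔ ∃ i, e = unitV d i ∨ e = -unitV d i := by
  unfold nbrs
  simp only [Finset.mem_image, Finset.mem_univ, true_and]
  constructor
  · rintro ⟨⟨i, b⟩, h⟩
    exact ⟨i, by cases b <;> simp_all⟩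
  · rintro ⟨i, h | h⟩
    exacts [⟨(i, true), by simp [h]⟩, ⟨(i, false), by simp [h]⟩]

lemma neg_mem_nbrs {e : Zd d} (he : e ∈ nbrs d) : -e ∈ nbrs d := by
  rw [mem_nbrs_iff] at he ⊢
  obtain ⟨i, h | h⟩ := he
  exacts [⟨i, Or.inr (by rw [h])⟩, ⟨i, Or.inl (by rw [h, neg_neg])⟩]

lemma dotZ_unit (i j : Fin d) : dotZ (unitV d i) (unitV d j) = if i = j then (1:ℝ) else 0 := by
  unfold dotZ unitV
  by_cases hij : i = j
  · subst hij
    rw [Finset.sum_eq_single i] <;> simp +contextual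
  · rw [Finset.sum_eq_zero]
    · simp [hij]
    · intro k _
      by_cases hk : k = i
      · subst hk; simp [hij]
      · simp [hk]

lemma dotZ_neg_left (x b : Zd d) : dotZ (-x) b = -dotZ x b := by
  unfold dotZ; rw [← Finset.sum_neg_distrib]; congr 1; funext i
  simp only [Pi.neg_apply]; push_cast; ring

lemma dotZ_neg_right (x b : Zd d) : dotZ x (-b) = -dotZ x b := by
  unfold dotZ; rw [← Finset.sum_neg_distrib]; congr 1; funext i
  simp only [Pi.neg_apply]; push_cast; ring

lemma dotZ_add_left (x y b : Zd d) : dotZ (x + y) b = dotZ x b + dotZ y b := by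
  unfold dotZ; rw [← Finset.sum_add_distrib]; congr 1; funext i
  simp only [Pi.add_apply]; push_cast; ring

lemma neg_unitV_ne (i j : Fin d) : -unitV d i ≠ unitV d j :=
  fun h => unitV_ne_neg j i h.symm

lemma dotZ_nbrs {e b : Zd d} (he : e ∈ nbrs d) (hb : b ∈ nbrs d) :
    dotZ e b = (if e = b then (1:ℝ) else 0) - (if e = -b then (1:ℝ) else 0) := by
  rw [mem_nbrs_iff] at he hb
  obtain ⟨i, hi | hi⟩ := he <;> obtain ⟨j, hj⟩ := hb <;> subst hi <;>
    rcases hj with hj | hj <;> subst hj <;>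
    simp only [dotZ_neg_left, dotZ_neg_right, dotZ_unit, neg_neg, neg_inj,
      unitV_injective.eq_iff, if_neg (unitV_ne_neg i j), if_neg (neg_unitV_ne i j)] <;>
    by_cases h : i = j <;> simp [h]

lemma deg_shift (x : Zd d) (ω : Config d) : deg (shift x ω) 0 = deg ω x := by
  unfold deg
  congr 1
  apply Finset.filter_congr
  intro e _
  rw [edgeOpen_shift, zero_add, add_zero]

lemma edgeOpen_sym (ω : Config d) : Symmetric (fun a b => edgeOpen ω a b) :=
  fun _ _ h => h.symm

lemma cluster_comm {ω : Config d} {a c : Zd d} (h : c ∈ cluster ω a) : a ∈ cluster ω c := by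
  unfold cluster at h ⊢
  haveI : Std.Symm (fun a b => edgeOpen ω a b) := ⟨edgeOpen_sym ω⟩
  exact (Relation.ReflTransGen.symmetric (r := fun a b => edgeOpen ω a b)).symm _ _ h

lemma cluster_eq_of_mem {ω : Config d} {a c : Zd d} (h : c ∈ cluster ω a) :
    cluster ω c = cluster ω a := by
  ext z
  exact ⟨fun hz => Relation.ReflTransGen.trans h hz,
    fun hz => Relation.ReflTransGen.trans (cluster_comm h) hz⟩

lemma mem_cluster_shift {ω : Config d} {x z : Zd d} :
    z ∈ cluster (shift x ω) 0 ↔ x + z ∈ cluster ω x := by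
  unfold cluster
  constructor
  · intro h
    have := Relation.ReflTransGen.lift (fun a => x + a)
      (fun a c (h : edgeOpen (shift x ω) a c) => (edgeOpen_shift x a c ω).mp h) _ _ h
    simpa only [Function.onFun, Set.mem_setOf_eq, add_zero] using this
  · intro h
    have := Relation.ReflTransGen.lift (fun a => -x + a)
      (fun a c (h : edgeOpen ω a c) => by
        rw [show a = x + (-x + a) by rw [add_neg_cancel_left],
          show c = x + (-x + c) by rw [add_neg_cancel_left]] at h
        exact (edgeOpen_shift x (-x + a) (-x + c) ω).mpr h) _ _ h
    simpa only [Function.onFun, Set.mem_setOf_eq, neg_add_cancel, neg_add_cancel_left] using this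

lemma cluster_shift (ω : Config d) (x : Zd d) :
    cluster (shift x ω) 0 = (fun z => -x + z) '' (cluster ω x) := by
  ext z
  rw [mem_cluster_shift]
  constructor
  · intro h; exact ⟨x + z, h, by show -x + (x + z) = z; rw [neg_add_cancel_left]⟩
  · rintro ⟨w, hw, rfl⟩; show x + (-x + w) ∈ _; rwa [add_neg_cancel_left]

lemma shift_mem_inf_iff {ω : Config d} {x : Zd d} :
    shift x ω ∈ InfiniteCluster0 d ↔ (cluster ω x).Infinite := by
  show (cluster (shift x ω) 0).Infinite ↔ _
  rw [cluster_shift]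
  exact Set.infinite_image_iff
    (Set.injOn_of_injective (add_right_injective (-x)))

lemma shift_mem_inf {ω : Config d} {x : Zd d} (hx : x ∈ cluster ω 0)
    (hω : ω ∈ InfiniteCluster0 d) : shift x ω ∈ InfiniteCluster0 d := by
  rw [shift_mem_inf_iff, cluster_eq_of_mem hx]
  exact hω

/-- shift e ω ∈ S_{-e} iff ω ∈ S_e, pointwise. -/
lemma shift_mem_S (e : Zd d) (ω : Config d) :
    (edgeOpen (shift e ω) 0 (-e) ∧ shift e ω ∈ InfiniteCluster0 d) ↔
      (edgeOpen ω 0 e ∧ ω ∈ InfiniteCluster0 d) := by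
  have hopen : edgeOpen (shift e ω) 0 (-e) ↔ edgeOpen ω 0 e := by
    rw [edgeOpen_shift, add_zero, add_neg_cancel]
    exact ⟨fun h => h.symm, fun h => h.symm⟩
  rw [hopen]
  apply and_congr_right
  intro hop
  rw [shift_mem_inf_iff]
  have he : e ∈ cluster ω 0 := Relation.ReflTransGen.single hop
  rw [cluster_eq_of_mem he]
  exact Iff.rfl

lemma bhat_diff {e b : Zd d} (he : e ∈ nbrs d) (hb : b ∈ nbrs d) (ω₁ ω₂ : Config d) :
    bhat b (ω₁, e) - bhat b (ω₂, -e) = 2 * dotZ e b := by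
  rw [dotZ_nbrs he hb]
  unfold bhat
  simp only [neg_inj, neg_eq_iff_eq_neg]
  by_cases h1 : e = b <;> by_cases h2 : e = -b <;> simp [h1, h2] <;> ring

lemma key_pointwise (G : Zd d → Config d → Zd d → ℝ) {ω : Config d} (χ : Zd d → Fin d → ℝ)
    (hχ : IsCorrector G χ ω) {x : Zd d} (hx : x ∈ cluster ω 0) {b : Zd d} (hb : b ∈ nbrs d) :
    Lgen ω (fun y => dotZ y b + dotR (χ y) b) x =
      (1 / 2) * divStarF (shift x ω) (fun ω' e => bhat b (ω', e)) +
        (1 / 2) * divStarF (shift x ω) (G b) := by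
  have hterm : ∀ e ∈ nbrs d,
      (if edgeOpen ω x (x + e) then
          (dotZ (x + e) b + dotR (χ (x + e)) b) - (dotZ x b + dotR (χ x) b) else 0) =
        1 / 2 * (if edgeOpen (shift x ω) 0 e then
            bhat b (shift x ω, e) - bhat b (shift e (shift x ω), -e) else 0) +
          1 / 2 * (if edgeOpen (shift x ω) 0 e then
            G b (shift x ω) e - G b (shift e (shift x ω)) (-e) else 0) := by
    intro e he
    have hcond : edgeOpen (shift x ω) 0 e ↔ edgeOpen ω x (x + e) := by
      rw [edgeOpen_shift, add_zero]
    by_cases hop : edgeOpen ω x (x + e)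
    · have hop' : edgeOpen (shift x ω) 0 e := hcond.mpr hop
      rw [if_pos hop, if_pos hop', if_pos hop']
      have hcor := hχ x hx e he hop b hb
      have hxe : x + e ∈ cluster ω 0 := Relation.ReflTransGen.tail hx hop
      have hop2 : edgeOpen ω (x + e) ((x + e) + -e) := by
        rw [add_neg_cancel_right]
        exact hop.symm
      have hcor2 := hχ (x + e) hxe (-e) (neg_mem_nbrs he) hop2 b hb
      rw [add_neg_cancel_right] at hcor2
      rw [bhat_diff he hb, shift_shift, ← hcor2, ← hcor, dotZ_add_left]
      ring
    · have hop' : ¬ edgeOpen (shift x ω) 0 e := fun h => hop (hcond.mp h)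
      rw [if_neg hop, if_neg hop', if_neg hop']
      ring
  simp only [Lgen, divStarF, deg_shift]
  rw [Finset.sum_congr rfl hterm, Finset.sum_add_distrib, ← Finset.mul_sum, ← Finset.mul_sum]
  ring

/-! ### Measurability infrastructure -/

lemma measurableSet_coord (a : Zd d × Fin d) (y : Bool) :
    MeasurableSet {ω : Config d | ω a = y} := by
  have h : Measurable (fun ω : Config d => ω a) := measurable_pi_apply a
  exact h (measurableSet_singleton y)

def cylSets (d : ℕ) : Set (Set (Config d)) :=
  {A | ∃ (s : Finset (Zd d × Fin d)) (f : (Zd d × Fin d) → Bool),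
    A = {ω | ∀ a ∈ s, ω a = f a}}

lemma measurableSet_cyl {A : Set (Config d)} (hA : A ∈ cylSets d) : MeasurableSet A := by
  obtain ⟨s, f, rfl⟩ := hA
  have h : {ω : Config d | ∀ a ∈ s, ω a = f a} = ⋂ a ∈ s, {ω : Config d | ω a = f a} := by
    ext ω; simp only [Set.mem_iInter, Set.mem_setOf_eq]
  rw [h]
  exact MeasurableSet.biInter s.countable_toSet (fun a _ => measurableSet_coord a (f a))

lemma isPiSystem_cyl : IsPiSystem (cylSets d) := by
  rintro A ⟨s, f, rfl⟩ B ⟨t, g, rfl⟩ hne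
  obtain ⟨ω₀, hω₀A, hω₀B⟩ := hne
  refine ⟨s ∪ t, fun a => if a ∈ s then f a else g a, ?_⟩
  ext ω
  simp only [Set.mem_inter_iff, Set.mem_setOf_eq, Finset.mem_union]
  constructor
  · rintro ⟨hA, hB⟩ a (ha | ha)
    · rw [if_pos ha]; exact hA a ha
    · by_cases h : a ∈ s
      · rw [if_pos h]; exact hA a h
      · rw [if_neg h]; exact hB a ha
  · intro h
    constructor
    · intro a ha
      have := h a (Or.inl ha); rwa [if_pos ha] at this
    · intro a ha
      have := h a (Or.inr ha)
      by_cases h' : a ∈ s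
      · rw [if_pos h'] at this
        rw [this, ← hω₀A a h', hω₀B a ha]
      · rwa [if_neg h'] at this

lemma generateFrom_cyl :
    (inferInstance : MeasurableSpace (Config d)) =
      MeasurableSpace.generateFrom (cylSets d) := by
  refine le_antisymm ?_ (MeasurableSpace.generateFrom_le fun A hA => measurableSet_cyl hA)
  have key : ∀ (a : Zd d × Fin d) (s : Set Bool),
      MeasurableSet[MeasurableSpace.generateFrom (cylSets d)]
        ((fun ω : Config d => ω a) ⁻¹' s) := by
    intro a s
    have h1 : ∀ y : Bool, MeasurableSet[MeasurableSpace.generateFrom (cylSets d)]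
        ((fun ω : Config d => ω a) ⁻¹' {y}) := fun y =>
      MeasurableSpace.measurableSet_generateFrom ⟨{a}, fun _ => y, by ext ω; simp⟩
    have hs : (fun ω : Config d => ω a) ⁻¹' s = ⋃ y ∈ s, (fun ω : Config d => ω a) ⁻¹' {y} := by
      ext ω; simp
    rw [hs]
    exact MeasurableSet.biUnion s.to_countable (fun y _ => h1 y)
  show (MeasurableSpace.pi : MeasurableSpace (Config d)) ≤ _
  refine iSup_le fun a => ?_
  intro t ht
  rw [MeasurableSpace.measurableSet_comap] at ht
  obtain ⟨s, -, rfl⟩ := ht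
  exact key a s

lemma measurable_shift (x : Zd d) : Measurable (shift x : Config d → Config d) :=
  measurable_pi_lambda _ (fun p => measurable_pi_apply _)

lemma map_shift_eq {Q : Measure (Config d)} {q : ℝ} (hQ : IsBernoulli Q q) (x : Zd d) :
    Measure.map (shift x) Q = Q := by
  haveI : IsProbabilityMeasure Q := hQ.1
  haveI : IsProbabilityMeasure (Measure.map (shift x) Q) :=
    Measure.isProbabilityMeasure_map (measurable_shift x).aemeasurable
  apply MeasureTheory.ext_of_generate_finite (cylSets d) generateFrom_cyl isPiSystem_cyl
  · rintro A ⟨s, f, rfl⟩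
    rw [Measure.map_apply (measurable_shift x) (measurableSet_cyl ⟨s, f, rfl⟩)]
    have hinj : Function.Injective (fun a : Zd d × Fin d => (x + a.1, a.2)) := by
      rintro ⟨a1, a2⟩ ⟨c1, c2⟩ h
      simp only [Prod.mk.injEq] at h
      exact Prod.ext (add_left_cancel h.1) h.2
    have hpre : (shift x) ⁻¹' {ω : Config d | ∀ a ∈ s, ω a = f a} =
        {ω : Config d | ∀ a ∈ s.image (fun a => (x + a.1, a.2)),
          ω a = f (a.1 - x, a.2)} := by
      ext ω
      simp only [Set.mem_preimage, Set.mem_setOf_eq, Finset.mem_image]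
      constructor
      · rintro h a ⟨c, hc, rfl⟩
        simp only [add_sub_cancel_left]
        exact h c hc
      · intro h a ha
        have := h (x + a.1, a.2) ⟨a, ha, rfl⟩
        simpa [shift, add_sub_cancel_left] using this
    rw [hpre, hQ.2, hQ.2 s f]
    rw [Finset.prod_image (fun a _ c _ h => hinj h)]
    apply Finset.prod_congr rfl
    intro a _
    simp [add_sub_cancel_left]
  · simp

lemma measurableSet_edgeOpen (a c : Zd d) : MeasurableSet {ω : Config d | edgeOpen ω a c} := by
  have h : {ω : Config d | edgeOpen ω a c} =
      (⋃ i, {ω : Config d | c = a + unitV d i ∧ ω (a, i) = true}) ∪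
        (⋃ i, {ω : Config d | a = c + unitV d i ∧ ω (c, i) = true}) := by
    ext ω; simp [edgeOpen]
  rw [h]
  apply MeasurableSet.union <;> refine MeasurableSet.iUnion (fun i => ?_)
  · by_cases hP : c = a + unitV d i
    · have he : {ω : Config d | c = a + unitV d i ∧ ω (a, i) = true} =
          {ω : Config d | ω (a, i) = true} := by ext ω; simp [hP]
      rw [he]; exact measurableSet_coord (a, i) true
    · have he : {ω : Config d | c = a + unitV d i ∧ ω (a, i) = true} = ∅ := by
        ext ω; simp [hP]
      rw [he]; exact MeasurableSet.empty
  · by_cases hP : a = c + unitV d i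
    · have he : {ω : Config d | a = c + unitV d i ∧ ω (c, i) = true} =
          {ω : Config d | ω (c, i) = true} := by ext ω; simp [hP]
      rw [he]; exact measurableSet_coord (c, i) true
    · have he : {ω : Config d | a = c + unitV d i ∧ ω (c, i) = true} = ∅ := by
        ext ω; simp [hP]
      rw [he]; exact MeasurableSet.empty

lemma measurableSet_chain (a : Zd d) (l : List (Zd d)) :
    MeasurableSet {ω : Config d | List.Chain (edgeOpen ω) a l} := by
  induction l generalizing a with
  | nil => simp [List.Chain]
  | cons b l ih =>
    have h : {ω : Config d | List.Chain (edgeOpen ω) a (b :: l)} =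
        {ω : Config d | edgeOpen ω a b} ∩ {ω : Config d | List.Chain (edgeOpen ω) b l} := by
      ext ω; simp [List.Chain]
    rw [h]
    exact (measurableSet_edgeOpen a b).inter (ih b)

lemma measurableSet_mem_cluster (x y : Zd d) :
    MeasurableSet {ω : Config d | y ∈ cluster ω x} := by
  have h : {ω : Config d | y ∈ cluster ω x} =
      ⋃ l : List (Zd d), {ω : Config d | List.Chain (edgeOpen ω) x l ∧
        (x :: l).getLast (List.cons_ne_nil _ _) = y} := by
    ext ω
    simp only [Set.mem_iUnion, Set.mem_setOf_eq]
    constructor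
    · intro h
      exact List.exists_isChain_cons_of_relationReflTransGen h
    · rintro ⟨l, hl1, hl2⟩
      exact List.relationReflTransGen_of_exists_isChain_cons l hl1 hl2
  rw [h]
  refine MeasurableSet.iUnion (fun l => ?_)
  by_cases hP : (x :: l).getLast (List.cons_ne_nil _ _) = y
  · have he : {ω : Config d | List.Chain (edgeOpen ω) x l ∧
        (x :: l).getLast (List.cons_ne_nil _ _) = y} =
        {ω : Config d | List.Chain (edgeOpen ω) x l} := by ext ω; simp [hP]
    rw [he]; exact measurableSet_chain x l
  · have he : {ω : Config d | List.Chain (edgeOpen ω) x l ∧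
        (x :: l).getLast (List.cons_ne_nil _ _) = y} = ∅ := by ext ω; simp [hP]
    rw [he]; exact MeasurableSet.empty

lemma measurableSet_inf0 : MeasurableSet (InfiniteCluster0 d) := by
  have h : InfiniteCluster0 d =
      ⋂ F : Finset (Zd d), ⋃ y : Zd d, {ω : Config d | y ∉ F ∧ y ∈ cluster ω 0} := by
    ext ω
    simp only [Set.mem_iInter, Set.mem_iUnion, Set.mem_setOf_eq]
    constructor
    · intro h F
      obtain ⟨y, hy1, hy2⟩ := Set.Infinite.exists_notMem_finset h F
      exact ⟨y, hy2, hy1⟩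
    · intro h
      show (cluster ω 0).Infinite
      by_contra hfin
      rw [Set.not_infinite] at hfin
      obtain ⟨y, hy1, hy2⟩ := h hfin.toFinset
      exact hy1 (hfin.mem_toFinset.mpr hy2)
  rw [h]
  refine MeasurableSet.iInter (fun F => ?_)
  refine MeasurableSet.iUnion (fun y => ?_)
  by_cases hP : y ∉ F
  · have he : {ω : Config d | y ∉ F ∧ y ∈ cluster ω 0} =
        {ω : Config d | y ∈ cluster ω 0} := by ext ω; simp [hP]
    rw [he]; exact measurableSet_mem_cluster 0 y
  · have he : {ω : Config d | y ∉ F ∧ y ∈ cluster ω 0} = ∅ := by ext ω; simp [hP]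
    rw [he]; exact MeasurableSet.empty

lemma measurableSet_S (e : Zd d) :
    MeasurableSet {ω : Config d | edgeOpen ω 0 e ∧ ω ∈ InfiniteCluster0 d} :=
  (measurableSet_edgeOpen 0 e).inter measurableSet_inf0

/-! ### Measure-theoretic infrastructure on `Mm` -/

def Sset (d : ℕ) (e : Zd d) : Set (Config d) :=
  {ω | edgeOpen ω 0 e ∧ ω ∈ InfiniteCluster0 d}

lemma measurableSet_Sset (e : Zd d) : MeasurableSet (Sset d e) := measurableSet_S e

def nuM (Q : Measure (Config d)) (e : Zd d) : Measure (Config d × Zd d) :=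
  Measure.map (fun ω => (ω, e)) (Q.restrict (Sset d e))

lemma Mm_eq_sum (Q : Measure (Config d)) : Mm Q = ∑ e ∈ nbrs d, nuM Q e := rfl

lemma measurable_pair (e : Zd d) : Measurable (fun ω : Config d => (ω, e)) :=
  measurable_id.prodMk measurable_const

lemma nuM_le_Mm {Q : Measure (Config d)} {e : Zd d} (he : e ∈ nbrs d) : nuM Q e ≤ Mm Q := by
  rw [Mm_eq_sum, Measure.le_iff]
  intro s hs
  rw [Measure.finset_sum_apply]
  exact Finset.single_le_sum (f := fun e => nuM Q e s) (fun i _ => by simp) he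

lemma isFiniteMeasure_Mm {Q : Measure (Config d)} [IsProbabilityMeasure Q] :
    IsFiniteMeasure (Mm Q) := by
  constructor
  rw [Mm_eq_sum, Measure.finset_sum_apply]
  refine ENNReal.sum_lt_top.mpr (fun e _ => ?_)
  have h1 : nuM Q e Set.univ ≤ 1 := by
    rw [nuM, Measure.map_apply (measurable_pair e) MeasurableSet.univ]
    calc Q.restrict (Sset d e) _ ≤ Q.restrict (Sset d e) Set.univ := measure_mono (Set.subset_univ _)
      _ ≤ Q Set.univ := Measure.restrict_le_self _
      _ = 1 := measure_univ
  exact lt_of_le_of_lt h1 (by norm_num)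

lemma integral_Mm {Q : Measure (Config d)} (f : Config d × Zd d → ℝ)
    (hf : Integrable f (Mm Q)) :
    ∫ p, f p ∂(Mm Q) = ∑ e ∈ nbrs d, ∫ ω in Sset d e, f (ω, e) ∂Q := by
  rw [Mm_eq_sum, integral_finset_sum_measure
    (fun e he => hf.mono_measure (nuM_le_Mm he))]
  refine Finset.sum_congr rfl (fun e he => ?_)
  exact integral_map (measurable_pair e).aemeasurable
    (hf.mono_measure (nuM_le_Mm he)).aestronglyMeasurable

lemma ae_slice {μ : Measure (Config d)} {P : Config d × Zd d → Prop} (e : Zd d)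
    (h : ∀ᵐ p ∂(Measure.map (fun ω => (ω, e)) μ), P p) : ∀ᵐ ω ∂μ, P (ω, e) := by
  rw [ae_iff] at h ⊢
  obtain ⟨N', hsub, hmeas, hnull⟩ := exists_measurable_superset_of_null h
  have hss : {ω : Config d | ¬ P (ω, e)} ⊆ (fun ω => (ω, e)) ⁻¹' N' :=
    fun ω hω => hsub hω
  refine measure_mono_null hss ?_
  have hm := Measure.map_apply (measurable_pair e) hmeas (μ := μ)
  rw [← hm]
  exact hnull

lemma ae_shift {Q : Measure (Config d)} {q : ℝ} (hQ : IsBernoulli Q q) {P : Config d → Prop}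
    (x : Zd d) (h : ∀ᵐ ω ∂Q, P ω) : ∀ᵐ ω ∂Q, P (shift x ω) := by
  rw [ae_iff] at h ⊢
  obtain ⟨N', hsub, hmeas, hnull⟩ := exists_measurable_superset_of_null h
  have hss : {ω : Config d | ¬ P (shift x ω)} ⊆ (shift x) ⁻¹' N' :=
    fun ω hω => hsub hω
  refine measure_mono_null hss ?_
  have hm := Measure.map_apply (measurable_shift x) hmeas (μ := Q)
  rw [map_shift_eq hQ x] at hm
  rw [← hm]
  exact hnull

/-! ### Local functions -/

lemma isLocal_bound {u : Config d → ℝ} (hu : IsLocal u) :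
    Measurable u ∧ ∃ C : ℝ, ∀ ω, |u ω| ≤ C := by
  obtain ⟨s, hs⟩ := hu
  set π : Config d → ((a : {a // a ∈ s}) → Bool) := fun ω a => ω a.1 with hπ
  set v : ((a : {a // a ∈ s}) → Bool) → ℝ :=
    fun g => u (fun c => if h : c ∈ s then g ⟨c, h⟩ else false) with hv
  have huv : u = v ∘ π := by
    funext ω
    exact hs ω _ (fun a ha => by simp [hv, hπ, ha])
  constructor
  · rw [huv]
    exact (measurable_of_countable v).comp
      (measurable_pi_lambda _ (fun a => measurable_pi_apply _))
  · have hfin : ((fun g => |v g|) '' Set.univ).Finite := (Set.finite_univ.image _)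
    obtain ⟨C, hC⟩ := hfin.bddAbove
    refine ⟨C, fun ω => ?_⟩
    rw [huv]
    exact hC ⟨π ω, Set.mem_univ _, rfl⟩

lemma gradF_measurable {u : Config d → ℝ} (hu : IsLocal u) : Measurable (gradF u) := by
  obtain ⟨hm, -⟩ := isLocal_bound hu
  exact measurable_from_prod_countable_left
    (fun e => (hm.comp (measurable_shift e)).sub hm)

lemma gradF_bound {u : Config d → ℝ} (hu : IsLocal u) :
    ∃ C : ℝ, ∀ p, ‖gradF u p‖ ≤ C := by
  obtain ⟨-, C, hC⟩ := isLocal_bound hu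
  refine ⟨C + C, fun p => ?_⟩
  calc ‖gradF u p‖ = |u (shift p.2 p.1) - u p.1| := rfl
    _ ≤ |u (shift p.2 p.1)| + |u p.1| := abs_sub _ _
    _ ≤ C + C := add_le_add (hC _) (hC _)

/-! ### The divergence-free property, a.e. -/

lemma Dfun_ae_zero {Q : Measure (Config d)} {q : ℝ} (hQ : IsBernoulli Q q)
    (G : Zd d → Config d → Zd d → ℝ) (hG : IsGradField Q G) {b : Zd d} (hb : b ∈ nbrs d) :
    ∀ᵐ ω ∂Q, (∑ e ∈ nbrs d, if edgeOpen ω 0 e ∧ ω ∈ InfiniteCluster0 d then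
      (bhat b (ω, e) + G b ω e) - (bhat b (shift e ω, -e) + G b (shift e ω) (-e)) else 0)
        = 0 := by
  haveI : IsProbabilityMeasure Q := hQ.1
  haveI : IsFiniteMeasure (Mm Q) := isFiniteMeasure_Mm
  obtain ⟨⟨g, hgpot, hgae⟩, horthG⟩ := hG b hb
  set gmk : Config d × Zd d → ℝ := (Lp.aestronglyMeasurable g).mk _ with hgdef
  have hgmkm : Measurable gmk := (Lp.aestronglyMeasurable g).stronglyMeasurable_mk.measurable
  have hGae : (fun p : Config d × Zd d => G b p.1 p.2) =ᵐ[Mm Q] gmk :=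
    hgae.symm.trans (Lp.aestronglyMeasurable g).ae_eq_mk
  have hbhat_meas : Measurable (fun p : Config d × Zd d => bhat b p) :=
    measurable_from_prod_countable_left (fun e => by dsimp only [bhat]; exact measurable_const' (fun _ _ => rfl))
  set wm : Config d × Zd d → ℝ := fun p => bhat b p + gmk p with hwmdef
  have hwm_meas : Measurable wm := hbhat_meas.add hgmkm
  have hw_ae : (fun p : Config d × Zd d => bhat b p + G b p.1 p.2) =ᵐ[Mm Q] wm := by
    filter_upwards [hGae] with p hp
    simp only [hwmdef, hp]
  have hwm_mem2 : MemLp wm 2 (Mm Q) := by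
    apply MemLp.add
    · refine MemLp.of_bound hbhat_meas.aestronglyMeasurable 2
        (Filter.Eventually.of_forall (fun p => ?_))
      simp only [bhat, Real.norm_eq_abs]
      split_ifs <;> norm_num
    · exact (Lp.memLp g).ae_eq (Lp.aestronglyMeasurable g).ae_eq_mk
  have hwm_int : Integrable wm (Mm Q) := hwm_mem2.integrable (by norm_num)
  -- the indicator fields
  set A : Zd d → Config d → ℝ := fun e => (Sset d e).indicator (fun ω => wm (ω, e)) with hAdef
  set Cc : Zd d → Config d → ℝ :=
    fun e => (Sset d e).indicator (fun ω => wm (shift e ω, -e)) with hCdef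
  set Dm : Config d → ℝ := fun ω => ∑ e ∈ nbrs d, (A e ω - Cc e ω) with hDdef
  have hCc_eq : ∀ e : Zd d, Cc e = fun ω => A (-e) (shift e ω) := by
    intro e; funext ω
    simp only [hCdef, hAdef, Set.indicator_apply]
    have h : shift e ω ∈ Sset d (-e) ↔ ω ∈ Sset d e := shift_mem_S e ω
    by_cases hmem : ω ∈ Sset d e
    · rw [if_pos hmem, if_pos (h.mpr hmem)]
    · rw [if_neg hmem, if_neg (fun hc => hmem (h.mp hc))]
  have hA_meas : ∀ e, Measurable (A e) := fun e =>
    (hwm_meas.comp (measurable_pair e)).indicator (measurableSet_Sset e)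
  have hCc_meas : ∀ e, Measurable (Cc e) := fun e => by
    rw [hCc_eq e]; exact (hA_meas (-e)).comp (measurable_shift e)
  have hA_int : ∀ e ∈ nbrs d, Integrable (A e) Q := by
    intro e he
    have h1 : Integrable wm (nuM Q e) := hwm_int.mono_measure (nuM_le_Mm he)
    have h2 : Integrable (fun ω => wm (ω, e)) (Q.restrict (Sset d e)) :=
      (integrable_map_measure h1.aestronglyMeasurable
        (measurable_pair e).aemeasurable).mp h1
    exact MeasureTheory.IntegrableOn.integrable_indicator h2 (measurableSet_Sset e)
  have hCc_int : ∀ e ∈ nbrs d, Integrable (Cc e) Q := by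
    intro e he
    have hAint : Integrable (A (-e)) Q := hA_int (-e) (neg_mem_nbrs he)
    have hmap : Measure.map (shift e) Q = Q := map_shift_eq hQ e
    rw [hCc_eq e]
    refine (integrable_map_measure (g := A (-e)) ?_ (measurable_shift e).aemeasurable).mp ?_
    · rw [hmap]; exact hAint.aestronglyMeasurable
    · rw [hmap]; exact hAint
  have hDm_int : Integrable Dm Q :=
    integrable_finset_sum _ (fun e he => (hA_int e he).sub (hCc_int e he))
  have hDm_meas : Measurable Dm :=
    Finset.measurable_sum _ (fun e _ => (hA_meas e).sub (hCc_meas e))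
  -- orthogonality against local functions
  have horth : ∀ u : Config d → ℝ, IsLocal u → ∫ ω, Dm ω * u ω ∂Q = 0 := by
    intro u hu
    obtain ⟨hum, Cu, hCu⟩ := isLocal_bound hu
    have hubd : ∃ C : ℝ, ∀ ω, ‖u ω‖ ≤ C := ⟨Cu, fun ω => hCu ω⟩
    have hgmem : MemLp (gradF u) 2 (Mm Q) := by
      obtain ⟨C, hC⟩ := gradF_bound hu
      exact MemLp.of_bound (gradF_measurable hu).aestronglyMeasurable C
        (Filter.Eventually.of_forall hC)
    have hvpot : hgmem.toLp (gradF u) ∈ L2pot Q :=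
      subset_closure ⟨u, hu, hgmem.coeFn_toLp⟩
    have h0 := horthG _ hvpot
    have h1 : ∫ p, wm p * gradF u p ∂(Mm Q) = 0 := by
      rw [← h0]
      apply integral_congr_ae
      filter_upwards [hw_ae, hgmem.coeFn_toLp] with p hp1 hp2
      rw [← hp1, hp2]
    have hGint : Integrable (fun p => wm p * gradF u p) (Mm Q) := by
      have h2 : Integrable (fun p => gradF u p * wm p) (Mm Q) :=
        hwm_int.bdd_mul (gradF_measurable hu).aestronglyMeasurable
          (Filter.Eventually.of_forall (gradF_bound hu).choose_spec)
      exact h2.congr (Filter.Eventually.of_forall (fun p => mul_comm _ _))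
    rw [integral_Mm _ hGint] at h1
    have hint_Au : ∀ e ∈ nbrs d, Integrable (fun ω => A e ω * u ω) Q := fun e he =>
      ((hA_int e he).bdd_mul hum.aestronglyMeasurable (Filter.Eventually.of_forall hubd.choose_spec)).congr
        (Filter.Eventually.of_forall (fun ω => mul_comm _ _))
    have hint_Cu : ∀ e : Zd d, e ∈ nbrs d → Integrable (fun ω => Cc e ω * u ω) Q := fun e he =>
      ((hCc_int e he).bdd_mul hum.aestronglyMeasurable (Filter.Eventually.of_forall hubd.choose_spec)).congr
        (Filter.Eventually.of_forall (fun ω => mul_comm _ _))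
    have hterm : ∀ e ∈ nbrs d,
        ∫ ω in Sset d e, wm (ω, e) * gradF u (ω, e) ∂Q =
          (∫ ω, Cc (-e) ω * u ω ∂Q) - ∫ ω, A e ω * u ω ∂Q := by
      intro e he
      have hACc : ∀ ω, A e (shift (-e) ω) = Cc (-e) ω := by
        intro ω
        conv_rhs => rw [hCc_eq (-e)]
        simp only [neg_neg]
      have step1 : ∫ ω in Sset d e, wm (ω, e) * gradF u (ω, e) ∂Q =
          ∫ ω, A e ω * gradF u (ω, e) ∂Q := by
        rw [← integral_indicator (measurableSet_Sset e)]
        apply integral_congr_ae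
        exact Filter.Eventually.of_forall (fun ω => Set.indicator_mul_left _ _ _)
      have hint1 : Integrable (fun ω => A e ω * u (shift e ω)) Q :=
        ((hA_int e he).bdd_mul (hum.comp (measurable_shift e)).aestronglyMeasurable
          (Filter.Eventually.of_forall (fun ω => hCu (shift e ω)))).congr
          (Filter.Eventually.of_forall (fun ω => mul_comm _ _))
      have step2 : ∫ ω, A e ω * gradF u (ω, e) ∂Q =
          (∫ ω, A e ω * u (shift e ω) ∂Q) - ∫ ω, A e ω * u ω ∂Q := by
        rw [← integral_sub hint1 (hint_Au e he)]
        apply integral_congr_ae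
        refine Filter.Eventually.of_forall (fun ω => ?_)
        show A e ω * (u (shift e ω) - u ω) = _
        ring
      have hmap : Measure.map (shift e) Q = Q := map_shift_eq hQ e
      have hmeas2 : AEStronglyMeasurable (fun ω => A e (shift (-e) ω) * u ω)
          (Measure.map (shift e) Q) := by
        rw [hmap]
        exact (((hA_meas e).comp (measurable_shift (-e))).mul hum).aestronglyMeasurable
      have hcov : ∫ ω, A e ω * u (shift e ω) ∂Q = ∫ ω, A e (shift (-e) ω) * u ω ∂Q := by
        calc ∫ ω, A e ω * u (shift e ω) ∂Q
            = ∫ ω, A e (shift (-e) (shift e ω)) * u (shift e ω) ∂Q := by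
              apply integral_congr_ae
              exact Filter.Eventually.of_forall (fun ω => by dsimp only; rw [shift_neg_shift])
          _ = ∫ ω, A e (shift (-e) ω) * u ω ∂Q := by
              rw [← integral_map (measurable_shift e).aemeasurable hmeas2, hmap]
      rw [step1, step2, hcov]
      congr 1
      apply integral_congr_ae
      exact Filter.Eventually.of_forall (fun ω => by dsimp only; rw [hACc])
    rw [Finset.sum_congr rfl hterm, Finset.sum_sub_distrib] at h1
    have hsum1 : ∑ e ∈ nbrs d, ∫ ω, Cc (-e) ω * u ω ∂Q =
        ∑ e ∈ nbrs d, ∫ ω, Cc e ω * u ω ∂Q := by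
      refine Finset.sum_equiv (Equiv.neg (Zd d)) (fun i => ?_) (fun i _ => ?_)
      · simp only [Equiv.neg_apply]
        exact ⟨fun h => neg_mem_nbrs h, fun h => by simpa using neg_mem_nbrs h⟩
      · simp only [Equiv.neg_apply]
    rw [hsum1, ← integral_finset_sum _ hint_Cu, ← integral_finset_sum _ hint_Au,
      ← integral_sub (integrable_finset_sum _ hint_Cu) (integrable_finset_sum _ hint_Au)] at h1
    have hDmu : ∀ ω, Dm ω * u ω =
        -((∑ e ∈ nbrs d, Cc e ω * u ω) - ∑ e ∈ nbrs d, A e ω * u ω) := by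
      intro ω
      simp only [hDdef, Finset.sum_mul, sub_mul, Finset.sum_sub_distrib]
      ring
    calc ∫ ω, Dm ω * u ω ∂Q
        = ∫ ω, -((∑ e ∈ nbrs d, Cc e ω * u ω) - ∑ e ∈ nbrs d, A e ω * u ω) ∂Q :=
          integral_congr_ae (Filter.Eventually.of_forall hDmu)
      _ = -∫ ω, ((∑ e ∈ nbrs d, Cc e ω * u ω) - ∑ e ∈ nbrs d, A e ω * u ω) ∂Q :=
          integral_neg _
      _ = 0 := by rw [h1, neg_zero]
  -- set integrals of Dm vanish
  have htot : ∫ ω, Dm ω ∂Q = 0 := by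
    have := horth (fun _ => 1) ⟨∅, fun _ _ _ => rfl⟩
    simpa using this
  have hsetint : ∀ ⦃t : Set (Config d)⦄, MeasurableSet t → ∫ ω in t, Dm ω ∂Q = 0 := by
    refine MeasurableSpace.induction_on_inter generateFrom_cyl isPiSystem_cyl ?_ ?_ ?_ ?_
    · simp
    · rintro t ⟨s, f, rfl⟩
      have hu : IsLocal ({ω' : Config d | ∀ a ∈ s, ω' a = f a}.indicator (fun _ => (1:ℝ))) := by
        refine ⟨s, fun ω ω' hag => ?_⟩
        simp only [Set.indicator_apply]
        have : (ω ∈ {ω' : Config d | ∀ a ∈ s, ω' a = f a}) ↔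
            (ω' ∈ {ω'' : Config d | ∀ a ∈ s, ω'' a = f a}) := by
          constructor
          · intro h a ha; rw [← hag a ha]; exact h a ha
          · intro h a ha; rw [hag a ha]; exact h a ha
        rw [if_congr this rfl rfl]
      have h1 := horth _ hu
      rw [← integral_indicator (measurableSet_cyl ⟨s, f, rfl⟩), ← h1]
      apply integral_congr_ae
      refine Filter.Eventually.of_forall (fun ω => ?_)
      simp only [Set.indicator_apply]
      split_ifs <;> simp
    · intro t ht h0
      have hadd := integral_add_compl ht hDm_int (f := Dm)
      rw [h0, htot] at hadd
      linarith
    · intro f hdisj hmeas h0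
      rw [integral_iUnion hmeas hdisj hDm_int.integrableOn]
      simp [h0]
  have hDm0 : Dm =ᵐ[Q] 0 :=
    ae_eq_zero_of_forall_setIntegral_eq_of_sigmaFinite
      (fun s _ _ => hDm_int.integrableOn) (fun s hs _ => hsetint hs)
  -- identification of Dm with the G-expression, a.e.
  have hslice : ∀ e : Zd d, e ∈ nbrs d → ∀ᵐ ω ∂Q, ω ∈ Sset d e → G b ω e = gmk (ω, e) := by
    intro e he
    have h1 : ∀ᵐ p ∂(nuM Q e), G b p.1 p.2 = gmk p :=
      hGae.filter_mono (ae_mono (nuM_le_Mm he))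
    have h2 : ∀ᵐ ω ∂(Q.restrict (Sset d e)), G b ω e = gmk (ω, e) := ae_slice e h1
    exact (ae_restrict_iff' (measurableSet_Sset e)).mp h2
  have hshift_slice : ∀ e : Zd d, e ∈ nbrs d →
      ∀ᵐ ω ∂Q, ω ∈ Sset d e → G b (shift e ω) (-e) = gmk (shift e ω, -e) := by
    intro e he
    have h2 := hslice (-e) (neg_mem_nbrs he)
    have h3 := ae_shift hQ e h2
    filter_upwards [h3] with ω hω hmem
    exact hω ((shift_mem_S e ω).mpr hmem)
  have hcomb : ∀ᵐ ω ∂Q, ∀ e : Zd d, e ∈ nbrs d → (ω ∈ Sset d e →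
      G b ω e = gmk (ω, e) ∧ G b (shift e ω) (-e) = gmk (shift e ω, -e)) := by
    rw [ae_all_iff]
    intro e
    by_cases he : e ∈ nbrs d
    · filter_upwards [hslice e he, hshift_slice e he] with ω h1 h2
      exact fun _ hmem => ⟨h1 hmem, h2 hmem⟩
    · exact Filter.Eventually.of_forall (fun ω h => absurd h he)
  filter_upwards [hcomb, hDm0] with ω h1 h2
  have hDval : Dm ω = 0 := h2
  have hsum : (∑ e ∈ nbrs d, if edgeOpen ω 0 e ∧ ω ∈ InfiniteCluster0 d then
      (bhat b (ω, e) + G b ω e) - (bhat b (shift e ω, -e) + G b (shift e ω) (-e)) else 0)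
      = Dm ω := by
    simp only [hDdef]
    refine Finset.sum_congr rfl (fun e he => ?_)
    by_cases hmem : ω ∈ Sset d e
    · rw [if_pos (show edgeOpen ω 0 e ∧ ω ∈ InfiniteCluster0 d from hmem)]
      obtain ⟨he1, he2⟩ := h1 e he hmem
      simp only [hAdef, hCdef]
      rw [Set.indicator_of_mem hmem, Set.indicator_of_mem hmem, he1, he2]
    · rw [if_neg (show ¬(edgeOpen ω 0 e ∧ ω ∈ InfiniteCluster0 d) from fun hc => hmem hc)]
      simp only [hAdef, hCdef]
      rw [Set.indicator_of_notMem hmem, Set.indicator_of_notMem hmem, sub_zero]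
  rw [hsum, hDval]

end PW
end

/-- for any `x` in the cluster and `b ∈ B`,
`L^ω φ(ω,x)·b = ½ ∇^{(ω)*}b̂(x.ω) + ½ ∇^{(ω)*}G_b(x.ω)`, where `φ(x)=x+χ(ω,x)`;
in particular this expression vanishes since `b̂ + G_b ∈ L²_sol`. -/
theorem harmonicity_divergence_identity (d : ℕ) (hd : 2 ≤ d)
    (Qf : ℝ → MeasureTheory.Measure (Config d))
    (hQf : ∀ q ∈ Set.Icc (0 : ℝ) 1, IsBernoulli (Qf q) q)
    (p : ℝ) (hp1 : p ≤ 1) (hpc : pcOf Qf < p)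
    (G : Zd d → Config d → Zd d → ℝ) (hG : IsGradField (Qf p) G) :
    ∀ᵐ ω ∂(Qf p), ω ∈ InfiniteCluster0 d →
      ∀ χ : Zd d → Fin d → ℝ, IsCorrector G χ ω →
        ∀ x ∈ cluster ω 0, ∀ b ∈ nbrs d,
          (Lgen ω (fun y => dotZ y b + dotR (χ y) b) x =
            (1 / 2) * divStarF (shift x ω) (fun ω' e => bhat b (ω', e)) +
              (1 / 2) * divStarF (shift x ω) (G b)) ∧
          Lgen ω (fun y => dotZ y b + dotR (χ y) b) x = 0 := by
  have hpc0 : (0 : ℝ) ≤ pcOf Qf := by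
    unfold pcOf
    rcases Set.eq_empty_or_nonempty
      {q : ℝ | q ∈ Set.Icc (0 : ℝ) 1 ∧ Qf q (InfiniteCluster0 d) = 0} with h | h
    · rw [h, Real.sSup_empty]
    · obtain ⟨r, hr⟩ := h
      have hbdd : BddAbove {q : ℝ | q ∈ Set.Icc (0 : ℝ) 1 ∧ Qf q (InfiniteCluster0 d) = 0} :=
        ⟨1, fun y hy => hy.1.2⟩
      exact le_trans hr.1.1 (le_csSup hbdd hr)
  have hp0 : 0 ≤ p := le_of_lt (lt_of_le_of_lt hpc0 hpc)
  have hQ : IsBernoulli (Qf p) p := hQf p ⟨hp0, hp1⟩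
  have hae : ∀ᵐ ω ∂(Qf p), ∀ b : Zd d, b ∈ nbrs d → ∀ x : Zd d,
      (∑ e ∈ nbrs d, if edgeOpen (shift x ω) 0 e ∧ shift x ω ∈ InfiniteCluster0 d then
        (bhat b (shift x ω, e) + G b (shift x ω) e) -
          (bhat b (shift e (shift x ω), -e) + G b (shift e (shift x ω)) (-e)) else 0) = 0 := by
    rw [MeasureTheory.ae_all_iff]
    intro b
    by_cases hb : b ∈ nbrs d
    · have hb' : ∀ᵐ ω ∂(Qf p), ∀ x : Zd d,
          (∑ e ∈ nbrs d, if edgeOpen (shift x ω) 0 e ∧ shift x ω ∈ InfiniteCluster0 d then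
            (bhat b (shift x ω, e) + G b (shift x ω) e) -
              (bhat b (shift e (shift x ω), -e) + G b (shift e (shift x ω)) (-e)) else 0)
                = 0 := by
        rw [MeasureTheory.ae_all_iff]
        intro x
        exact PW.ae_shift hQ x (PW.Dfun_ae_zero hQ G hG hb)
      filter_upwards [hb'] with ω hω
      exact fun _ => hω
    · exact Filter.Eventually.of_forall (fun ω h => absurd h hb)
  filter_upwards [hae] with ω hgood
  intro hω χ hχ x hx b hb
  have hfirst := PW.key_pointwise G χ hχ hx hb
  refine ⟨hfirst, ?_⟩
  rw [hfirst]
  have hinf : shift x ω ∈ InfiniteCluster0 d := PW.shift_mem_inf hx hω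
  have hD := hgood b hb x
  have hsum : ((∑ e ∈ nbrs d, if edgeOpen (shift x ω) 0 e then
        bhat b (shift x ω, e) - bhat b (shift e (shift x ω), -e) else 0) +
      ∑ e ∈ nbrs d, if edgeOpen (shift x ω) 0 e then
        G b (shift x ω) e - G b (shift e (shift x ω)) (-e) else 0) = 0 := by
    rw [← Finset.sum_add_distrib]
    refine Eq.trans (Finset.sum_congr rfl (fun e he => ?_)) hD
    by_cases hop : edgeOpen (shift x ω) 0 e
    · rw [if_pos hop, if_pos hop, if_pos ⟨hop, hinf⟩]
      ring
    · rw [if_neg hop, if_neg hop, if_neg (fun hc => hop hc.1)]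
      ring
  simp only [divStarF]
  linear_combination ((1 : ℝ) / 2) * ((deg (shift x ω) 0 : ℝ))⁻¹ * hsum

end PercWalk
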